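/- Let C ∈ 𝓑, β ∈ (0,1), and let ν be a probability measure on (S,𝓑) with P(x,·) ≥ β ν for all x ∈ C. Define the split chain as the Markov chain (X_n, Y_n) on S × {0,1} in which, given X_n = x, the bit Y_n equals 1 with probability β·1_C(x) (and 0 otherwise, independently of the past given X_n), and given (X_n, Y_n) = (x, i), the next state X_{n+1} has law ν if i = 1 and law (P(x,·) − β·1_C(x)·ν)/(1 − β·1_C(x)) if i = 0. Then for every x ∈ S, the law of the sequence (X_n)_{n≥0} obtained from the split chain started with X_0 = x equals ℙ^x, the law of the original Markov chain with kernel P started at x. -/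

import Mathlib

open MeasureTheory ProbabilityTheory
open scoped ENNReal NNReal

noncomputable section

/-- The hitting time `T_A = inf {n ≥ 1 : ω n ∈ A}`, with value `⊤ : ℕ∞` if no such `n` exists. -/
def hitTime {S : Type*} (A : Set S) (ω : ℕ → S) : ℕ∞ :=
  sInf ((fun k : ℕ => (k : ℕ∞)) '' {k : ℕ | 1 ≤ k ∧ ω k ∈ A})

/-- `IsMarkovPath K μ₀ L` says that `L` is the law on path space `ℕ → E` of the
time-homogeneous Markov chain with transition kernel `K` and initial distribution `μ₀`
(the measure produced by the Ionescu–Tulcea construction), characterized through its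
finite-dimensional distributions. -/
def IsMarkovPath {E : Type*} [MeasurableSpace E] (K : Kernel E E) (μ₀ : Measure E)
    (L : Measure (ℕ → E)) : Prop :=
  IsProbabilityMeasure L ∧
    L.map (fun ω => ω 0) = μ₀ ∧
    ∀ n : ℕ,
      L.map (fun ω => fun i : Fin (n + 2) => ω (i : ℕ)) =
        (L.map (fun ω => fun i : Fin (n + 1) => ω (i : ℕ))).bind
          (fun v => (K (v (Fin.last n))).map (Fin.snoc v))


/-- The distribution of `(x', Y)` where `Y` is a Bernoulli variable with success
probability `β · 1_C (x')`. -/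
def tagDist {S : Type*} [MeasurableSpace S] (C : Set S) (β : ℝ≥0∞) (x' : S) :
    Measure (S × Bool) :=
  (β * C.indicator 1 x') • Measure.dirac (x', true) +
    (1 - β * C.indicator 1 x') • Measure.dirac (x', false)

/-- The residual transition distribution `(P (x, ·) − β 1_C (x) ν) / (1 − β 1_C (x))`. -/
def residDist {S : Type*} [MeasurableSpace S] (P : Kernel S S) (C : Set S) (β : ℝ≥0∞)
    (ν : Measure S) (x : S) : Measure S :=
  (1 - β * C.indicator 1 x)⁻¹ • (P x - (β * C.indicator 1 x) • ν)

/-!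
The split chain moves by a kernel `Q` (to `ν` or to the residual distribution, according to the
bit) and then attaches to the new state `y` a fresh bit of law `β 1_C(y)`; averaging `Q (x, ·)`
over a bit of law `β 1_C(x)` gives back `P x`. Hence, by induction on `n`, the joint law of
`(X_0, …, X_n)` and `Y_n` is the law of the first `n + 1` states of the `P`-chain with a bit of law
`β 1_C(X_n)` attached. Forgetting the bit, the finite-dimensional distributions of `(X_n)` are
those of `ℙ^x`, and these determine a law on path space.
-/

namespace MeasureTheory.Measure

variable {α β γ : Type*} [MeasurableSpace α] [MeasurableSpace β] [MeasurableSpace γ]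

lemma map_bind (μ : Measure α) {f : α → Measure β} (hf : Measurable f) {g : β → γ}
    (hg : Measurable g) : (μ.bind f).map g = μ.bind fun a => (f a).map g := by
  ext s hs
  rw [map_apply hg hs, bind_apply (hg hs) hf.aemeasurable,
    bind_apply (f := fun a => (f a).map g) hs ((measurable_map g hg).comp hf).aemeasurable]
  exact lintegral_congr fun a => (map_apply hg hs).symm

lemma bind_map (μ : Measure α) {f : α → β} (hf : Measurable f) {g : β → Measure γ}
    (hg : Measurable g) : (μ.map f).bind g = μ.bind fun a => g (f a) := by
  ext s hs
  rw [bind_apply hs hg.aemeasurable,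
    bind_apply (f := fun a => g (f a)) hs (hg.comp hf).aemeasurable,
    lintegral_map (f := fun b => g b s) ((measurable_coe hs).comp hg) hf]

lemma map_fst_bind_map_prodMk (μ : Measure α) {ρ : α → Measure β}
    [∀ a, IsProbabilityMeasure (ρ a)] (hρ : Measurable fun a => (ρ a).map (Prod.mk a)) :
    (μ.bind fun a => (ρ a).map (Prod.mk a)).map Prod.fst = μ := by
  rw [map_bind μ hρ measurable_fst]
  conv_rhs => rw [← bind_dirac (m := μ)]
  congr 1
  funext a
  rw [map_map measurable_fst measurable_prodMk_left, Function.comp_def, map_const,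
    measure_univ, one_smul]

end MeasureTheory.Measure

lemma ProbabilityTheory.Kernel.measurable_map_comap {α β γ δ : Type*} [MeasurableSpace α]
    [MeasurableSpace β] [MeasurableSpace γ] [MeasurableSpace δ] (κ : Kernel α β)
    [IsSFiniteKernel κ] {ρ : δ → α} (hρ : Measurable ρ) {F : δ × β → γ} (hF : Measurable F) :
    Measurable fun d => (κ (ρ d)).map fun b => F (d, b) := by
  refine Measure.measurable_of_measurable_coe _ fun s hs => ?_
  have hsection : ∀ d, (κ (ρ d)).map (fun b => F (d, b)) s
      = κ.comap ρ hρ d (Prod.mk d ⁻¹' (F ⁻¹' s)) := fun d =>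
    Measure.map_apply (hF.comp measurable_prodMk_left) hs
  simp_rw [hsection]
  exact Kernel.measurable_kernel_prodMk_left (hF hs)

lemma ProbabilityTheory.Kernel.measurable_map_prodMk {α β : Type*} [MeasurableSpace α]
    [MeasurableSpace β] (κ : Kernel α β) [IsSFiniteKernel κ] :
    Measurable fun a => (κ a).map (Prod.mk a) :=
  κ.measurable_map_comap measurable_id measurable_id

lemma measurable_snoc {E : Type*} [MeasurableSpace E] (n : ℕ) :
    Measurable fun q : (Fin n → E) × E => (Fin.snoc q.1 q.2 : Fin (n + 1) → E) := by
  refine measurable_pi_lambda _ fun i => ?_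
  induction i using Fin.lastCases with
  | last => simpa only [Fin.snoc_last] using measurable_snd
  | cast j =>
    simpa only [Fin.snoc_castSucc] using
      (measurable_fst.eval : Measurable fun q : (Fin n → E) × E => q.1 j)

section MarkovPath

variable {E : Type*} [MeasurableSpace E]

def pathPrefix (n : ℕ) (ω : ℕ → E) : Fin (n + 1) → E := fun i => ω i

lemma measurable_pathPrefix (n : ℕ) : Measurable (pathPrefix (E := E) n) :=
  measurable_pi_lambda _ fun _ => measurable_pi_apply _

lemma MeasureTheory.Measure.ext_of_map_pathPrefix {μ ν : Measure (ℕ → E)} [IsFiniteMeasure μ]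
    (h : ∀ n, μ.map (pathPrefix n) = ν.map (pathPrefix n)) : μ = ν := by
  refine IsProjectiveLimit.unique (P := fun J => μ.map J.restrict) (fun _ => rfl) fun J => ?_
  have hlt : ∀ j ∈ J, j < J.sup id + 1 := fun j hj => Nat.lt_succ_of_le (J.le_sup (f := id) hj)
  have hrestr : Measurable fun v : Fin (J.sup id + 1) → E => fun j : J => v ⟨j, hlt j j.2⟩ :=
    measurable_pi_lambda _ fun _ => measurable_pi_apply _
  have hfactor : (J.restrict : (ℕ → E) → _) =
      (fun v : Fin (J.sup id + 1) → E => fun j : J => v ⟨j, hlt j j.2⟩) ∘ pathPrefix _ := rfl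
  simp only [hfactor, ← map_map hrestr (measurable_pathPrefix _), h]

def pathStep (K : Kernel E E) {n : ℕ} (v : Fin (n + 1) → E) : Measure (Fin (n + 2) → E) :=
  (K (v (Fin.last n))).map (Fin.snoc v)

lemma measurable_pathStep (K : Kernel E E) [IsSFiniteKernel K] (n : ℕ) :
    Measurable (pathStep K (n := n)) :=
  K.measurable_map_comap (measurable_pi_apply _) (measurable_snoc (n + 1))

namespace IsMarkovPath

variable {K : Kernel E E} {μ : Measure E} {L L' : Measure (ℕ → E)}

lemma map_pathPrefix_zero (h : IsMarkovPath K μ L) :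
    L.map (pathPrefix 0) = μ.map fun x _ => x := by
  have hfactor : pathPrefix (E := E) 0 = (fun x _ => x) ∘ fun ω => ω 0 := by
    funext ω i
    rw [Fin.fin_one_eq_zero i]
    rfl
  have hconst : Measurable fun x : E => fun _ : Fin 1 => x :=
    measurable_pi_lambda _ fun _ => measurable_id
  rw [hfactor, ← Measure.map_map hconst (measurable_pi_apply 0), h.2.1]

lemma map_pathPrefix_succ (h : IsMarkovPath K μ L) (n : ℕ) :
    L.map (pathPrefix (n + 1)) = (L.map (pathPrefix n)).bind (pathStep K) :=
  h.2.2 n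

lemma unique (h : IsMarkovPath K μ L) (h' : IsMarkovPath K μ L') : L = L' := by
  have := h.1
  refine Measure.ext_of_map_pathPrefix fun n => ?_
  induction n with
  | zero => rw [h.map_pathPrefix_zero, h'.map_pathPrefix_zero]
  | succ n ih => rw [h.map_pathPrefix_succ, h'.map_pathPrefix_succ, ih]

end IsMarkovPath

end MarkovPath

section Splitting

variable {S F : Type*} {n : ℕ}

def splitPrefix (v : Fin (n + 1) → S × F) : (Fin (n + 1) → S) × F :=
  (fun i => (v i).1, (v (Fin.last n)).2)

lemma splitPrefix_snoc (v : Fin (n + 1) → S × F) (e : S × F) :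
    splitPrefix (Fin.snoc v e : Fin (n + 2) → S × F) = (Fin.snoc (splitPrefix v).1 e.1, e.2) := by
  refine Prod.ext (funext fun i => ?_) (by simp [splitPrefix])
  induction i using Fin.lastCases with
  | last => simp [splitPrefix]
  | cast j => simp [splitPrefix]

variable [MeasurableSpace S] [MeasurableSpace F]

def attachSnd (τ : Kernel S F) (u : Fin (n + 1) → S) : Measure ((Fin (n + 1) → S) × F) :=
  (τ (u (Fin.last n))).map (Prod.mk u)

def splitStep (K : Kernel (S × F) (S × F)) (q : (Fin (n + 1) → S) × F) :
    Measure ((Fin (n + 2) → S) × F) :=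
  (K (q.1 (Fin.last n), q.2)).map fun e => (Fin.snoc q.1 e.1, e.2)

lemma measurable_splitPrefix : Measurable (splitPrefix (S := S) (F := F) (n := n)) :=
  (measurable_pi_lambda _ fun i => (measurable_pi_apply i).fst).prodMk
    (measurable_pi_apply _).snd

lemma measurable_attachSnd (τ : Kernel S F) [IsSFiniteKernel τ] :
    Measurable (attachSnd τ (n := n)) :=
  τ.measurable_map_comap (measurable_pi_apply _) measurable_id

lemma measurable_splitStep (K : Kernel (S × F) (S × F)) [IsSFiniteKernel K] :
    Measurable (splitStep K (n := n)) :=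
  K.measurable_map_comap ((measurable_fst.eval).prodMk measurable_snd)
    (((measurable_snoc _).comp (measurable_fst.fst.prodMk measurable_snd.fst)).prodMk
      measurable_snd.snd)

lemma map_fst_bind_attachSnd (τ : Kernel S F) [IsMarkovKernel τ]
    (M : Measure (Fin (n + 1) → S)) : (M.bind (attachSnd τ)).map Prod.fst = M :=
  M.map_fst_bind_map_prodMk (ρ := fun u => τ (u (Fin.last n))) (measurable_attachSnd τ)

lemma IsMarkovPath.map_splitPrefix_succ {K : Kernel (S × F) (S × F)} [IsSFiniteKernel K]
    {ρ : Measure (S × F)} {L : Measure (ℕ → S × F)} (hL : IsMarkovPath K ρ L) (n : ℕ) :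
    (L.map (pathPrefix (n + 1))).map splitPrefix
      = ((L.map (pathPrefix n)).map splitPrefix).bind (splitStep K) := by
  rw [hL.map_pathPrefix_succ, Measure.map_bind _ (measurable_pathStep K n) measurable_splitPrefix,
    Measure.bind_map _ measurable_splitPrefix (measurable_splitStep K)]
  congr 1
  funext v
  have hsnoc : Measurable (Fin.snoc (α := fun _ => S × F) v) :=
    (measurable_snoc _).comp measurable_prodMk_left
  rw [pathStep, Measure.map_map measurable_splitPrefix hsnoc]
  simp only [splitStep, Function.comp_def, splitPrefix_snoc]
  rfl

variable {P : Kernel S S} {τ : Kernel S F} {Q : Kernel (S × F) S} {K : Kernel (S × F) (S × F)}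

lemma bind_kernel_eq_bind_map_prodMk [IsSFiniteKernel τ]
    (hK : ∀ z, K z = (Q z).bind fun y => (τ y).map (Prod.mk y))
    (hP : ∀ x, (τ x).bind (fun i => Q (x, i)) = P x) (x : S) :
    (τ x).bind (fun i => K (x, i)) = (P x).bind fun y => (τ y).map (Prod.mk y) := by
  simp_rw [hK, ← hP]
  exact (Measure.bind_bind (Q.measurable.comp measurable_prodMk_left).aemeasurable
    τ.measurable_map_prodMk.aemeasurable).symm

lemma attachSnd_bind_splitStep [IsSFiniteKernel τ] [IsSFiniteKernel K]
    (hK : ∀ z, K z = (Q z).bind fun y => (τ y).map (Prod.mk y))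
    (hP : ∀ x, (τ x).bind (fun i => Q (x, i)) = P x) (u : Fin (n + 1) → S) :
    (attachSnd τ u).bind (splitStep K) = (pathStep P u).bind (attachSnd τ) := by
  set x := u (Fin.last n)
  have hφ : Measurable fun e : S × F => (Fin.snoc (α := fun _ => S) u e.1, e.2) :=
    ((measurable_snoc _).comp (measurable_const.prodMk measurable_fst)).prodMk measurable_snd
  have hsnoc : Measurable (Fin.snoc (α := fun _ => S) u) :=
    (measurable_snoc _).comp measurable_prodMk_left
  calc (attachSnd τ u).bind (splitStep K)
      = (τ x).bind fun i => (K (x, i)).map fun e => (Fin.snoc u e.1, e.2) :=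
        Measure.bind_map _ measurable_prodMk_left (measurable_splitStep K)
    _ = ((τ x).bind fun i => K (x, i)).map fun e => (Fin.snoc u e.1, e.2) :=
        (Measure.map_bind _ (K.measurable.comp measurable_prodMk_left) hφ).symm
    _ = ((P x).bind fun y => (τ y).map (Prod.mk y)).map fun e => (Fin.snoc u e.1, e.2) := by
        rw [bind_kernel_eq_bind_map_prodMk hK hP]
    _ = (P x).bind fun y => (τ y).map (Prod.mk (Fin.snoc u y)) := by
        rw [Measure.map_bind _ τ.measurable_map_prodMk hφ]
        congr 1
        funext y
        rw [Measure.map_map hφ measurable_prodMk_left]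
        rfl
    _ = (pathStep P u).bind (attachSnd τ) := by
        rw [pathStep, Measure.bind_map _ hsnoc (measurable_attachSnd τ)]
        simp only [attachSnd, Fin.snoc_last]
        rfl

lemma bind_splitStep_of_eq_bind_attachSnd [IsSFiniteKernel P] [IsSFiniteKernel τ]
    [IsSFiniteKernel K] (hK : ∀ z, K z = (Q z).bind fun y => (τ y).map (Prod.mk y))
    (hP : ∀ x, (τ x).bind (fun i => Q (x, i)) = P x) {J : Measure ((Fin (n + 1) → S) × F)}
    (hJ : J = (J.map Prod.fst).bind (attachSnd τ)) :
    J.bind (splitStep K) = ((J.map Prod.fst).bind (pathStep P)).bind (attachSnd τ) := by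
  conv_lhs => rw [hJ]
  rw [Measure.bind_bind (measurable_attachSnd τ).aemeasurable (measurable_splitStep K).aemeasurable,
    Measure.bind_bind (measurable_pathStep P n).aemeasurable (measurable_attachSnd τ).aemeasurable]
  simp_rw [attachSnd_bind_splitStep hK hP]

lemma IsMarkovPath.map_splitPrefix_zero [IsSFiniteKernel τ] {μ : Measure S}
    {L : Measure (ℕ → S × F)}
    (hL : IsMarkovPath K (μ.bind fun x => (τ x).map (Prod.mk x)) L) :
    (L.map (pathPrefix 0)).map splitPrefix = (μ.map fun x _ => x).bind (attachSnd τ) := by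
  have hconst : Measurable fun z : S × F => fun _ : Fin 1 => z :=
    measurable_pi_lambda _ fun _ => measurable_id
  have hconstS : Measurable fun x : S => fun _ : Fin 1 => x :=
    measurable_pi_lambda _ fun _ => measurable_id
  rw [hL.map_pathPrefix_zero, Measure.map_map measurable_splitPrefix hconst,
    Measure.map_bind _ τ.measurable_map_prodMk (measurable_splitPrefix.comp hconst),
    Measure.bind_map _ hconstS (measurable_attachSnd τ)]
  congr 1
  funext x
  rw [Measure.map_map (measurable_splitPrefix.comp hconst) measurable_prodMk_left]
  rfl

theorem IsMarkovPath.map_fst_of_split [IsSFiniteKernel P] [IsMarkovKernel τ] [IsSFiniteKernel K]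
    (hK : ∀ z, K z = (Q z).bind fun y => (τ y).map (Prod.mk y))
    (hP : ∀ x, (τ x).bind (fun i => Q (x, i)) = P x) {μ : Measure S} {L : Measure (ℕ → S × F)}
    (hL : IsMarkovPath K (μ.bind fun x => (τ x).map (Prod.mk x)) L) :
    IsMarkovPath P μ (L.map fun ω n => (ω n).1) := by
  have hfstPath : Measurable fun (ω : ℕ → S × F) n => (ω n).1 :=
    measurable_pi_lambda _ fun n => (measurable_pi_apply n).fst
  set J : ∀ n, Measure ((Fin (n + 1) → S) × F) := fun n => (L.map (pathPrefix n)).map splitPrefix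
  have hfst : ∀ n, (L.map fun ω n => (ω n).1).map (pathPrefix n) = (J n).map Prod.fst := by
    intro n
    rw [Measure.map_map (measurable_pathPrefix n) hfstPath, Measure.map_map measurable_fst
      measurable_splitPrefix, Measure.map_map (measurable_fst.comp measurable_splitPrefix)
      (measurable_pathPrefix n)]
    rfl
  have hJsucc : ∀ n, J (n + 1) = (J n).bind (splitStep K) := hL.map_splitPrefix_succ
  -- given `X_0, …, X_n`, the bit `Y_n` has law `τ X_n`
  have hJ : ∀ n, J n = ((J n).map Prod.fst).bind (attachSnd τ) := by
    have of_eq_bind : ∀ {n} (M : Measure (Fin (n + 1) → S)), J n = M.bind (attachSnd τ) →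
        J n = ((J n).map Prod.fst).bind (attachSnd τ) := by
      intro n M h
      rw [h, map_fst_bind_attachSnd]
    intro n
    induction n with
    | zero => exact of_eq_bind _ hL.map_splitPrefix_zero
    | succ n ih =>
      exact of_eq_bind _ ((hJsucc n).trans
        (bind_splitStep_of_eq_bind_attachSnd hK hP ih))
  have := hL.1
  refine ⟨Measure.isProbabilityMeasure_map hfstPath.aemeasurable, ?_, fun n => ?_⟩
  · have hstart : Measurable fun ω : ℕ → S × F => ω 0 := measurable_pi_apply 0
    rw [Measure.map_map (measurable_pi_apply 0) hfstPath]
    change L.map (Prod.fst ∘ fun ω => ω 0) = μ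
    rw [← Measure.map_map measurable_fst hstart, hL.2.1,
      Measure.map_fst_bind_map_prodMk _ τ.measurable_map_prodMk]
  · show (L.map fun ω n => (ω n).1).map (pathPrefix (n + 1))
      = ((L.map fun ω n => (ω n).1).map (pathPrefix n)).bind (pathStep P)
    rw [hfst, hfst, hJsucc, bind_splitStep_of_eq_bind_attachSnd hK hP (hJ n),
      map_fst_bind_attachSnd]

end Splitting

section Nummelin

variable {S : Type*} {C : Set S} {β : ℝ≥0∞}

def bitDist (C : Set S) (β : ℝ≥0∞) (x : S) : Measure Bool :=
  (β * C.indicator 1 x) • Measure.dirac true + (1 - β * C.indicator 1 x) • Measure.dirac false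

lemma bitDist_bind {α : Type*} [MeasurableSpace α] (x : S) (f : Bool → Measure α) :
    (bitDist C β x).bind f
      = (β * C.indicator 1 x) • f true + (1 - β * C.indicator 1 x) • f false := by
  ext s hs
  rw [Measure.bind_apply hs (Measurable.of_discrete).aemeasurable, bitDist,
    lintegral_add_measure, lintegral_smul_measure, lintegral_smul_measure,
    lintegral_dirac, lintegral_dirac]
  rfl

variable [MeasurableSpace S]

lemma tagDist_eq_map_bitDist (C : Set S) (β : ℝ≥0∞) (x : S) :
    tagDist C β x = (bitDist C β x).map (Prod.mk x) := by
  rw [bitDist, Measure.map_add _ _ measurable_prodMk_left, Measure.map_smul, Measure.map_smul,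
    Measure.map_dirac' measurable_prodMk_left, Measure.map_dirac' measurable_prodMk_left, tagDist]

lemma measurable_bitDist (hC : MeasurableSet C) (β : ℝ≥0∞) : Measurable (bitDist C β) := by
  refine Measure.measurable_of_measurable_coe _ fun s _ => ?_
  have hp : Measurable fun x => β * C.indicator 1 x := (measurable_const.indicator hC).const_mul β
  simp only [bitDist, Measure.add_apply, Measure.smul_apply, smul_eq_mul]
  exact (hp.mul_const _).add ((measurable_const.sub hp).mul_const _)

def bitKernel (hC : MeasurableSet C) (β : ℝ≥0∞) : Kernel S Bool :=
  ⟨bitDist C β, measurable_bitDist hC β⟩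

lemma isMarkovKernel_bitKernel (hC : MeasurableSet C) (hβ : β ≤ 1) :
    IsMarkovKernel (bitKernel hC β) := by
  refine ⟨fun x => ⟨?_⟩⟩
  have hp : β * C.indicator 1 x ≤ 1 := by
    by_cases hx : x ∈ C <;> simp [hx, hβ]
  simp only [bitKernel, Kernel.coe_mk, bitDist, Measure.add_apply, Measure.smul_apply,
    measure_univ, smul_eq_mul, mul_one]
  exact add_tsub_cancel_of_le hp

variable {P : Kernel S S} {ν : Measure S} [IsFiniteMeasure ν]

lemma smul_add_smul_residDist (hβ1 : β < 1) (hmin : ∀ x ∈ C, β • ν ≤ P x) (x : S) :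
    (β * C.indicator 1 x) • ν + (1 - β * C.indicator 1 x) • residDist P C β ν x = P x := by
  have := ν.smul_finite (hβ1.trans ENNReal.one_lt_top).ne
  by_cases hx : x ∈ C
  · simp only [residDist, Set.indicator_of_mem hx, Pi.one_apply, mul_one, smul_smul]
    rw [ENNReal.mul_inv_cancel (tsub_pos_of_lt hβ1).ne'
      (tsub_le_self.trans_lt ENNReal.one_lt_top).ne, one_smul, add_comm,
      Measure.sub_add_cancel_of_le (hmin x hx)]
  · simp [residDist, Set.indicator_of_notMem hx, Measure.sub_zero]

lemma measurable_residDist (hC : MeasurableSet C) (hβ1 : β < 1) (hmin : ∀ x ∈ C, β • ν ≤ P x) :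
    Measurable (residDist P C β ν) := by
  classical
  have := ν.smul_finite (hβ1.trans ENNReal.one_lt_top).ne
  refine Measure.measurable_of_measurable_coe _ fun s hs => ?_
  have hcases : (fun x => residDist P C β ν x s)
      = fun x => if x ∈ C then (1 - β)⁻¹ * (P x s - β * ν s) else P x s := by
    funext x
    by_cases hx : x ∈ C
    · simp only [residDist, Set.indicator_of_mem hx, Pi.one_apply, mul_one, if_pos hx,
        Measure.smul_apply, smul_eq_mul, Measure.sub_apply hs (hmin x hx)]
    · simp [residDist, Measure.sub_zero, hx]
  rw [hcases]
  exact Measurable.ite hC (((P.measurable_coe hs).sub measurable_const).const_mul _)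
    (P.measurable_coe hs)

end Nummelin

theorem split_chain_first_component_law_general
    {S : Type*} [MeasurableSpace S]
    (P : Kernel S S) [IsMarkovKernel P]
    (Pr : S → Measure (ℕ → S))
    (hPr : ∀ x : S, IsMarkovPath P (Measure.dirac x) (Pr x))
    (C : Set S) (hC : MeasurableSet C)
    (β : ℝ≥0∞) (hβ1 : β < 1)
    (ν : Measure S) [IsProbabilityMeasure ν]
    (hmin : ∀ x ∈ C, β • ν ≤ P x)
    (K : Kernel (S × Bool) (S × Bool)) [IsMarkovKernel K]
    (hK : ∀ (x : S) (i : Bool),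
      K (x, i) = (if i then ν else residDist P C β ν x).bind (tagDist C β)) :
    ∀ (x : S) (L : Measure (ℕ → S × Bool)),
      IsMarkovPath K (tagDist C β x) L →
      L.map (fun ω => fun n : ℕ => (ω n).1) = Pr x := by
  intro x L hL
  have := isMarkovKernel_bitKernel hC hβ1.le
  let Q : Kernel (S × Bool) S :=
    ⟨fun z => if z.2 then ν else residDist P C β ν z.1,
      Measurable.ite ((measurableSet_singleton true).preimage measurable_snd) measurable_const
        ((measurable_residDist hC hβ1 hmin).comp measurable_fst)⟩
  have htag : tagDist C β = fun y => (bitKernel hC β y).map (Prod.mk y) :=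
    funext (tagDist_eq_map_bitDist C β)
  have hX : IsMarkovPath P (Measure.dirac x) (L.map fun ω n => (ω n).1) := by
    refine IsMarkovPath.map_fst_of_split (τ := bitKernel hC β) (Q := Q) (K := K)
      (fun z => ?_) (fun y => ?_) ?_
    · rw [← htag]
      exact hK z.1 z.2
    · exact (bitDist_bind y _).trans (smul_add_smul_residDist hβ1 hmin y)
    · rwa [Measure.dirac_bind (bitKernel hC β).measurable_map_prodMk, ← congrFun htag x]
  exact hX.unique (hPr x)

/-- **Nummelin splitting.** The first component of the split chain, started at `x` (with
`Y_0` Bernoulli of parameter `β 1_C (x)`), has the law `ℙ^x` of the original chain. -/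
theorem split_chain_first_component_law
    {S : Type*} [MeasurableSpace S] [MeasurableSpace.CountablyGenerated S]
    (P : Kernel S S) [IsMarkovKernel P]
    (Pr : S → Measure (ℕ → S))
    (hPr : ∀ x : S, IsMarkovPath P (Measure.dirac x) (Pr x))
    (C : Set S) (hC : MeasurableSet C)
    (β : ℝ≥0∞) (hβ0 : 0 < β) (hβ1 : β < 1)
    (ν : Measure S) [IsProbabilityMeasure ν]
    (hmin : ∀ x ∈ C, β • ν ≤ P x)
    (K : Kernel (S × Bool) (S × Bool)) [IsMarkovKernel K]
    (hK : ∀ (x : S) (i : Bool),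
      K (x, i) = (if i then ν else residDist P C β ν x).bind (tagDist C β)) :
    ∀ (x : S) (L : Measure (ℕ → S × Bool)),
      IsMarkovPath K (tagDist C β x) L →
      L.map (fun ω => fun n : ℕ => (ω n).1) = Pr x :=
  split_chain_first_component_law_general P Pr hPr C hC β hβ1 ν hmin K hK
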